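/- arXiv:1912.08792 — 2 statements merged into one kernel-verified Lean document; each statement's English description precedes it below -/
import Mathlib

section
/- Let n ≥ 1, let g : Fin n → ℝ be a vector of positive entries, let λ ≥ 0, and let φ : ℝ → ℝ be differentiable with strictly monotone increasing derivative (i.e., φ is strictly convex). Suppose τ : Fin n → ℝ satisfies the stationarity equations φ'(τ_i) = −λ·g_i for all i, and that the tolerance budget constraint ∑_i g_i·τ_i = Δ holds for some Δ > 0. Then, writing g_min = min_i g_i and ‖g‖₁ = ∑_i g_i, one has λ·g_min ≤ −φ'(Δ/‖g‖₁). -/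
/-- Lemma 1 (sign-corrected bound on the KKT multiplier λ):
if φ' (τ i) = -λ * g i for all i and ∑ g i * τ i = Δ > 0, then
λ * min_i g_i ≤ - φ' (Δ / ‖g‖₁). -/
theorem toco_lambda_bound (n : ℕ) (hn : 1 ≤ n) (g : Fin n → ℝ) (hg : ∀ i, 0 < g i)
    (lam : ℝ) (hlam : 0 ≤ lam) (φ : ℝ → ℝ) (hφ : Differentiable ℝ φ)
    (hφ' : StrictMono (deriv φ)) (τ : Fin n → ℝ)
    (hstat : ∀ i, deriv φ (τ i) = -lam * g i)
    (Δ : ℝ) (hΔ : 0 < Δ) (hbudget : ∑ i, g i * τ i = Δ) :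
    lam * (Finset.univ.inf' ⟨⟨0, by omega⟩, Finset.mem_univ _⟩ g) ≤
      - deriv φ (Δ / ∑ i, g i) := by
  set S := ∑ i, g i with hS
  have hS0 : 0 < S := Finset.sum_pos (fun i _ => hg i) ⟨⟨0, by omega⟩, Finset.mem_univ _⟩
  -- there exists j with τ j ≥ Δ / S
  have hj : ∃ j, Δ / S ≤ τ j := by
    by_contra h
    push_neg at h
    have : Δ < Δ := by
      calc Δ = ∑ i, g i * τ i := hbudget.symm
        _ < ∑ i, g i * (Δ / S) := by
            apply Finset.sum_lt_sum_of_nonempty ⟨⟨0, by omega⟩, Finset.mem_univ _⟩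
            intro i _
            exact mul_lt_mul_of_pos_left (h i) (hg i)
        _ = S * (Δ / S) := by rw [← Finset.sum_mul]
        _ = Δ := by field_simp
    exact lt_irrefl _ this
  obtain ⟨j, hjτ⟩ := hj
  have h1 : deriv φ (Δ / S) ≤ deriv φ (τ j) := hφ'.monotone hjτ
  rw [hstat j] at h1
  have hmin : Finset.univ.inf' ⟨⟨0, by omega⟩, Finset.mem_univ _⟩ g ≤ g j :=
    Finset.inf'_le _ (Finset.mem_univ j)
  have h2 : lam * Finset.univ.inf' ⟨⟨0, by omega⟩, Finset.mem_univ _⟩ g ≤ lam * g j :=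
    mul_le_mul_of_nonneg_left hmin hlam
  linarith
end

section
/- Closed-form solution for quadratic complexity (Special Case 2): Let n ≥ 1 and for each i let h_i > 0, g_i > 0, α_i ∈ {−1, 1}, and ω_i, c_i ∈ ℝ. Define φ_i(τ) = h_i·(ω_i − c_i + α_i·τ)², let Δ ∈ ℝ, and let S = ∑_i g_i²/(2h_i) (note S > 0). Define λ = (Δ − ∑_i α_i·g_i·(c_i − ω_i)) / S and τ_i = (g_i/(2h_i))·λ + α_i·(c_i − ω_i). Then this (λ, τ) satisfies the system φ_i'(τ_i) = λ·g_i for all i and ∑_i g_i·τ_i = Δ. -/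
open Finset

theorem hasDerivAt_mul_affine_sq (k a b t : ℝ) :
    HasDerivAt (fun t => k * (a + b * t) ^ 2) (k * (2 * (a + b * t) * b)) t := by
  simpa using ((((hasDerivAt_id t).const_mul b).const_add a).pow 2).const_mul k

/-- With `α ^ 2 = 1`, the shift `α * (c - ω)` cancels the offset `ω - c` inside the square. -/
theorem mul_affine_sq_deriv_eq_of_closedForm {h g α ω c lam τ : ℝ} (hh : h ≠ 0) (hα : α ^ 2 = 1)
    (hτ : τ = g / (2 * h) * lam + α * (c - ω)) :
    h * (2 * (ω - c + α * τ) * α) = lam * g := by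
  subst hτ
  field_simp
  linear_combination (g * lam + 2 * h * α * (c - ω)) * hα

theorem sum_mul_closedForm_eq {ι : Type*} [Fintype ι] (h g α ω c : ι → ℝ) {Δ lam : ℝ}
    (hS : ∑ i, g i ^ 2 / (2 * h i) ≠ 0)
    (hlam : lam = (Δ - ∑ i, α i * g i * (c i - ω i)) / ∑ i, g i ^ 2 / (2 * h i)) :
    ∑ i, g i * (g i / (2 * h i) * lam + α i * (c i - ω i)) = Δ := by
  calc ∑ i, g i * (g i / (2 * h i) * lam + α i * (c i - ω i))
      = (∑ i, g i ^ 2 / (2 * h i)) * lam + ∑ i, α i * g i * (c i - ω i) := by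
        rw [sum_mul, ← sum_add_distrib]
        exact sum_congr rfl fun i _ => by ring
    _ = Δ := by
        rw [hlam]
        field_simp
        ring

/-- Special Case 2 (quadratic complexity φ_i(τ) = h_i (ω_i - c_i + α_i τ)²):
the given closed-form λ and τ satisfy the stationarity equations
φ_i'(τ_i) = λ g_i and the active budget constraint ∑ g_i τ_i = Δ. -/
theorem toco_quadratic_closed_form (n : ℕ) (hn : 1 ≤ n)
    (h g : Fin n → ℝ) (hh : ∀ i, 0 < h i) (hgp : ∀ i, 0 < g i)
    (α : Fin n → ℝ) (hα : ∀ i, α i = -1 ∨ α i = 1)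
    (ω c : Fin n → ℝ) (Δ : ℝ)
    (S : ℝ) (hS : S = ∑ i, (g i) ^ 2 / (2 * h i))
    (lam : ℝ) (hlam : lam = (Δ - ∑ i, α i * g i * (c i - ω i)) / S)
    (τ : Fin n → ℝ) (hτ : ∀ i, τ i = g i / (2 * h i) * lam + α i * (c i - ω i)) :
    (∀ i, deriv (fun t => h i * (ω i - c i + α i * t) ^ 2) (τ i) = lam * g i) ∧
      ∑ i, g i * τ i = Δ := by
  have hS_pos : 0 < S := hS ▸ sum_pos (fun i _ => by have := hh i; have := hgp i; positivity)
    (univ_nonempty_iff.2 ⟨⟨0, hn⟩⟩)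
  subst hS
  refine ⟨fun i => ?_, ?_⟩
  · have hα_sq : α i ^ 2 = 1 := by rcases hα i with hi | hi <;> simp [hi]
    rw [(hasDerivAt_mul_affine_sq _ _ _ _).deriv]
    exact mul_affine_sq_deriv_eq_of_closedForm (hh i).ne' hα_sq (hτ i)
  · simp only [hτ]
    exact sum_mul_closedForm_eq h g α ω c hS_pos.ne' hlam
end
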